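/- arXiv:1702.03173 — 2 statements merged into one kernel-verified Lean document; each statement's English description precedes it below -/
import Mathlib

section
/- For any rooted tree T and any H ≼_P K in the pruning poset, the interval [H, K] in the pruning poset is order-isomorphic to the interval [H \ K, ∅]. Moreover, the down-set {I : I ≼_P K} with the induced order is isomorphic to the pruning poset of the stump tree T_γ(K). -/
/-- A finite rooted tree, encoded by its tree partial order on the vertex set `V`:
the root is the bottom element `⊥`, and any two ancestors of a common vertex are
comparable. -/
def TreeOrder (V : Type*) [PartialOrder V] [OrderBot V] : Prop :=
  ∀ a b c : V, b ≤ a → c ≤ a → (b ≤ c ∨ c ≤ b)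

/-- Edges of the rooted tree, identified with their upper ends (the non-root vertices).
The induced partial order on edges is the subtype order. -/
abbrev Edge (V : Type*) [PartialOrder V] [OrderBot V] := {v : V // v ≠ ⊥}

/-- The stump set `V_γ(H)`: the vertex set of the connected component of the root
in the forest `T − H`. -/
def stump {V : Type*} [PartialOrder V] [OrderBot V] (H : Set (Edge V)) : Set V :=
  {v | ∀ e ∈ H, ¬ (e.val ≤ v)}

/-- The pruning order: `H ≼_P K` iff `H = K ∪ A` for some set `A` of edges of the
stump tree of `T − K`. -/
def pleP {V : Type*} [PartialOrder V] [OrderBot V] (H K : Set (Edge V)) : Prop :=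
  ∃ A : Set (Edge V), A ⊆ {e : Edge V | e.val ∈ stump K} ∧ H = K ∪ A

/-- The pruning order of the stump tree of `T − K` (a rooted tree with vertex set
`stump K` and the same root): `H' ≼_P K'` within the vertex set `S`. -/
def plePIn {V : Type*} [PartialOrder V] [OrderBot V] (S : Set V)
    (H' K' : Set (Edge V)) : Prop :=
  ∃ A : Set (Edge V), A ⊆ {e : Edge V | e.val ∈ S ∩ stump K'} ∧ H' = K' ∪ A

section Aux
variable {V : Type*} [PartialOrder V] [OrderBot V]

lemma pleP_sub {H K : Set (Edge V)} (h : pleP H K) :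
    K ⊆ H ∧ H \ K ⊆ {e : Edge V | e.val ∈ stump K} := by
  obtain ⟨A, hA, rfl⟩ := h
  exact ⟨Set.subset_union_left, fun e he => hA (he.1.resolve_left he.2)⟩

lemma stump_anti {J K : Set (Edge V)} (h : J ⊆ K) : stump K ⊆ stump J :=
  fun v hv e he => hv e (h he)

lemma stump_union (J K : Set (Edge V)) : stump (J ∪ K) = stump J ∩ stump K := by
  ext v
  constructor
  · intro hv; exact ⟨fun e he => hv e (Or.inl he), fun e he => hv e (Or.inr he)⟩
  · rintro ⟨h1, h2⟩ e (he | he); exacts [h1 e he, h2 e he]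

lemma disj_stump (K : Set (Edge V)) :
    Disjoint K {e : Edge V | e.val ∈ stump K} := by
  rw [Set.disjoint_left]
  intro e he hst
  exact hst e he le_rfl

lemma pleP_empty (I : Set (Edge V)) : pleP I (∅ : Set (Edge V)) :=
  ⟨I, fun e _ f hf => absurd hf (Set.notMem_empty f), (Set.empty_union I).symm⟩

/-- key lemma: on `{I // pleP I K}` the pruning order coincides with the pruning
order of the differences. -/
lemma pleP_diff_iff {K a b : Set (Edge V)} (ha : pleP a K) (hb : pleP b K) :
    pleP a b ↔ pleP (a \ K) (b \ K) := by
  obtain ⟨hKa, haK⟩ := pleP_sub ha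
  obtain ⟨hKb, hbK⟩ := pleP_sub hb
  constructor
  · rintro ⟨A, hA, rfl⟩
    refine ⟨A \ K, ?_, Set.union_diff_distrib⟩
    intro e he
    exact stump_anti Set.diff_subset (hA he.1)
  · rintro ⟨A, hA, hEq⟩
    refine ⟨A, ?_, ?_⟩
    · intro e he
      have h1 : e.val ∈ stump K := haK (hEq ▸ Or.inr he)
      have h2 : e.val ∈ stump (b \ K) := hA he
      have : b = K ∪ (b \ K) := (Set.union_diff_cancel hKb).symm
      rw [Set.mem_setOf_eq, this, stump_union]
      exact ⟨h1, h2⟩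
    · have : a = K ∪ (a \ K) := (Set.union_diff_cancel hKa).symm
      rw [this, hEq, ← Set.union_assoc, Set.union_diff_cancel hKb]

lemma plePIn_iff {K a b : Set (Edge V)} (haK : a \ K ⊆ {e : Edge V | e.val ∈ stump K}) :
    plePIn (stump K) (a \ K) (b \ K) ↔ pleP (a \ K) (b \ K) := by
  constructor
  · rintro ⟨A, hA, hEq⟩
    exact ⟨A, fun e he => (hA he).2, hEq⟩
  · rintro ⟨A, hA, hEq⟩
    refine ⟨A, fun e he => ⟨haK (hEq ▸ Or.inr he), hA he⟩, hEq⟩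

end Aux

/-- for `H ≼_P K`, the interval `[H, K]` of the pruning poset is
order-isomorphic to the interval `[H \ K, ∅]`; moreover the down-set `{I : I ≼_P K}`
is order-isomorphic to the pruning poset of the stump tree `T_γ(K)`. -/
theorem pruning_interval_iso {V : Type*} [Fintype V] [PartialOrder V] [OrderBot V]
    (hT : TreeOrder V) (H K : Set (Edge V)) (hHK : pleP H K) :
    (∃ φ : {I : Set (Edge V) // pleP H I ∧ pleP I K} ≃
           {I : Set (Edge V) // pleP (H \ K) I ∧ pleP I (∅ : Set (Edge V))},
        ∀ a b, pleP a.val b.val ↔ pleP (φ a).val (φ b).val) ∧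
    (∃ ψ : {I : Set (Edge V) // pleP I K} ≃
           {I : Set (Edge V) // I ⊆ {e : Edge V | e.val ∈ stump K}},
        ∀ a b, pleP a.val b.val ↔ plePIn (stump K) (ψ a).val (ψ b).val) := by
  have hsub : ∀ J : Set (Edge V), pleP (H \ K) J → J ⊆ {e : Edge V | e.val ∈ stump K} :=
    fun J hJ => (pleP_sub hJ).1.trans (pleP_sub hHK).2
  have hcanc : ∀ J : Set (Edge V), J ⊆ {e : Edge V | e.val ∈ stump K} →
      (K ∪ J) \ K = J := fun J hJ =>
    Set.union_diff_cancel_left ((disj_stump K).mono_right hJ).le_bot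
  constructor
  · refine ⟨⟨fun I => ⟨I.val \ K,
        (pleP_diff_iff hHK I.2.2).mp I.2.1, pleP_empty _⟩,
      fun J => ⟨K ∪ J.val, ?_, ⟨J.val, hsub J.val J.2.1, rfl⟩⟩, ?_, ?_⟩, ?_⟩
    · refine (pleP_diff_iff hHK ⟨J.val, hsub J.val J.2.1, rfl⟩).mpr ?_
      rw [hcanc J.val (hsub J.val J.2.1)]
      exact J.2.1
    · intro I
      exact Subtype.ext (Set.union_diff_cancel (pleP_sub I.2.2).1)
    · intro J
      exact Subtype.ext (hcanc J.val (hsub J.val J.2.1))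
    · intro a b
      exact pleP_diff_iff a.2.2 b.2.2
  · refine ⟨⟨fun I => ⟨I.val \ K, (pleP_sub I.2).2⟩,
      fun J => ⟨K ∪ J.val, ⟨J.val, J.2, rfl⟩⟩, ?_, ?_⟩, ?_⟩
    · intro I
      exact Subtype.ext (Set.union_diff_cancel (pleP_sub I.2).1)
    · intro J
      exact Subtype.ext (hcanc J.val J.2)
    · intro a b
      exact (pleP_diff_iff a.2 b.2).trans (plePIn_iff (pleP_sub a.2).2).symm
end

section
/- For a fixed fragmentation tree T with vertex set G and underlying link set L, the set {F_t = G} of realisations of the fragmentation process ending in state G at time t is the disjoint union over all fragmentation trees T' ∈ τ(G, L) of the matching events {F_t ↔ T'}, where {F_t ↔ T'} requires max{τ_α : α ∈ G} ≤ t, t < τ_{L∖G}, and τ_α = τ_{G_α(∅)} for all α ∈ G (with G_α(∅) the descendants of α in T' including α). -/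
/-- The vertex set of a binary tree with labels in `ℕ`. -/
def Tree.vertices : Tree ℕ → Finset ℕ
  | .nil => ∅
  | .node a l r => insert a (l.vertices ∪ r.vertices)

/-- A binary tree is a binary search tree (a fragmentation tree shape) if, at every
vertex, the left subtree contains exactly the smaller vertices and the right subtree
exactly the larger ones. -/
def Tree.IsBST : Tree ℕ → Prop
  | .nil => True
  | .node a l r =>
      (∀ x ∈ l.vertices, x < a) ∧ (∀ x ∈ r.vertices, a < x) ∧ l.IsBST ∧ r.IsBST

/-- The subtree `T_α` of a binary tree: the set of `α` together with all of its
descendants. -/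
def Tree.desc : Tree ℕ → ℕ → Finset ℕ
  | .nil, _ => ∅
  | .node a l r, α =>
      if a = α then Tree.vertices (.node a l r) else l.desc α ∪ r.desc α

lemma Tree.desc_subset_vertices (tr : Tree ℕ) (α : ℕ) : tr.desc α ⊆ tr.vertices := by
  induction tr with
  | nil => simp [Tree.desc]
  | node a l r ihl ihr =>
    simp only [Tree.desc]
    split
    · exact subset_rfl
    · intro x hx
      simp only [Tree.vertices, Finset.mem_insert, Finset.mem_union]
      rcases Finset.mem_union.1 hx with h | h
      · exact Or.inr (Or.inl (ihl h))
      · exact Or.inr (Or.inr (ihr h))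

lemma Tree.vertices_eq_empty {tr : Tree ℕ} (h : tr.vertices = ∅) : tr = .nil := by
  cases tr with
  | nil => rfl
  | node a l r => exact absurd h (by simp [Tree.vertices])

lemma Tree.desc_eq_empty {tr : Tree ℕ} {α : ℕ} (h : α ∉ tr.vertices) : tr.desc α = ∅ := by
  induction tr with
  | nil => simp [Tree.desc]
  | node a l r ihl ihr =>
    simp only [Tree.vertices, Finset.mem_insert, Finset.mem_union, not_or] at h
    have hne : a ≠ α := fun hh => h.1 hh.symm
    simp only [Tree.desc, if_neg hne, ihl h.2.1, ihr h.2.2, Finset.empty_union]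

lemma Tree.desc_node_left (a : ℕ) (l r : Tree ℕ) (α : ℕ) :
    l.desc α ⊆ (Tree.node a l r).desc α := by
  simp only [Tree.desc]
  split
  · exact (l.desc_subset_vertices α).trans (by
      intro x hx
      simp only [Tree.vertices, Finset.mem_insert, Finset.mem_union]
      exact Or.inr (Or.inl hx))
  · exact Finset.subset_union_left

lemma Tree.desc_node_right (a : ℕ) (l r : Tree ℕ) (α : ℕ) :
    r.desc α ⊆ (Tree.node a l r).desc α := by
  simp only [Tree.desc]
  split
  · exact (r.desc_subset_vertices α).trans (by
      intro x hx
      simp only [Tree.vertices, Finset.mem_insert, Finset.mem_union]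
      exact Or.inr (Or.inr hx))
  · exact Finset.subset_union_right

lemma Tree.desc_root (a : ℕ) (l r : Tree ℕ) :
    (Tree.node a l r).desc a = (Tree.node a l r).vertices := by
  simp [Tree.desc]

noncomputable def argminF (f : ℕ → ℝ) (S : Finset ℕ) : ℕ :=
  if h : S.Nonempty then (S.exists_min_image f h).choose else 0

lemma argminF_mem {f : ℕ → ℝ} {S : Finset ℕ} (h : S.Nonempty) : argminF f S ∈ S := by
  rw [argminF, dif_pos h]
  exact (S.exists_min_image f h).choose_spec.1

lemma argminF_le {f : ℕ → ℝ} {S : Finset ℕ} (h : S.Nonempty) :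
    ∀ x ∈ S, f (argminF f S) ≤ f x := by
  rw [argminF, dif_pos h]
  exact (S.exists_min_image f h).choose_spec.2

lemma filter_lt_ssubset {f : ℕ → ℝ} {S : Finset ℕ} (h : S.Nonempty) :
    S.filter (fun x => x < argminF f S) ⊂ S :=
  Finset.filter_ssubset.2 ⟨argminF f S, argminF_mem h, by simp⟩

lemma filter_gt_ssubset {f : ℕ → ℝ} {S : Finset ℕ} (h : S.Nonempty) :
    S.filter (fun x => argminF f S < x) ⊂ S :=
  Finset.filter_ssubset.2 ⟨argminF f S, argminF_mem h, by simp⟩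

noncomputable def buildTree (f : ℕ → ℝ) (S : Finset ℕ) : Tree ℕ :=
  if h : S.Nonempty then
    Tree.node (argminF f S)
      (buildTree f (S.filter (fun x => x < argminF f S)))
      (buildTree f (S.filter (fun x => argminF f S < x)))
  else Tree.nil
termination_by S.card
decreasing_by
  · exact Finset.card_lt_card (filter_lt_ssubset h)
  · exact Finset.card_lt_card (filter_gt_ssubset h)

lemma buildTree_spec (f : ℕ → ℝ) (S : Finset ℕ) :
    (buildTree f S).vertices = S ∧ (buildTree f S).IsBST ∧
      ∀ α, ∀ ν ∈ (buildTree f S).desc α, f α ≤ f ν := by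
  induction S using Finset.strongInductionOn with
  | _ S ih =>
    rw [buildTree]
    by_cases h : S.Nonempty
    · rw [dif_pos h]
      obtain ⟨vl, bl, dl⟩ := ih _ (filter_lt_ssubset h)
      obtain ⟨vr, br, dr⟩ := ih _ (filter_gt_ssubset h)
      have hvert : (Tree.node (argminF f S)
          (buildTree f (S.filter (fun x => x < argminF f S)))
          (buildTree f (S.filter (fun x => argminF f S < x)))).vertices = S := by
        rw [Tree.vertices, vl, vr]
        refine Finset.ext fun x => ?_
        simp only [Finset.mem_insert, Finset.mem_union, Finset.mem_filter]
        constructor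
        · rintro (rfl | ⟨hx, _⟩ | ⟨hx, _⟩)
          · exact argminF_mem h
          · exact hx
          · exact hx
        · intro hx
          rcases lt_trichotomy x (argminF f S) with hlt | rfl | hgt
          · exact Or.inr (Or.inl ⟨hx, hlt⟩)
          · exact Or.inl rfl
          · exact Or.inr (Or.inr ⟨hx, hgt⟩)
      refine ⟨hvert, ⟨?_, ?_, bl, br⟩, ?_⟩
      · intro x hx; rw [vl] at hx; exact (Finset.mem_filter.1 hx).2
      · intro x hx; rw [vr] at hx; exact (Finset.mem_filter.1 hx).2
      · intro α ν hν
        simp only [Tree.desc] at hν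
        split at hν
        · next heq =>
          subst heq
          rw [show (Tree.node (argminF f S)
            (buildTree f (S.filter (fun x => x < argminF f S)))
            (buildTree f (S.filter (fun x => argminF f S < x)))).vertices = S
            from hvert] at hν
          exact argminF_le h ν hν
        · rcases Finset.mem_union.1 hν with hh | hh
          · exact dl α ν hh
          · exact dr α ν hh
    · rw [dif_neg h]
      rw [Finset.not_nonempty_iff_eq_empty] at h
      subst h
      exact ⟨rfl, trivial, by simp [Tree.desc]⟩

lemma Tree.vertices_node_left {a : ℕ} {l r : Tree ℕ}
    (hb : (Tree.node a l r).IsBST) :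
    ∀ x, x ∈ l.vertices ↔ x ∈ (Tree.node a l r).vertices ∧ x < a := by
  obtain ⟨hl, hr, _, _⟩ := hb
  intro x
  constructor
  · intro hx
    refine ⟨?_, hl x hx⟩
    simp only [Tree.vertices, Finset.mem_insert, Finset.mem_union]
    exact Or.inr (Or.inl hx)
  · rintro ⟨hx, hxa⟩
    simp only [Tree.vertices, Finset.mem_insert, Finset.mem_union] at hx
    rcases hx with rfl | hx | hx
    · exact absurd hxa (lt_irrefl _)
    · exact hx
    · exact absurd (hr x hx) (by omega)

lemma Tree.vertices_node_right {a : ℕ} {l r : Tree ℕ}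
    (hb : (Tree.node a l r).IsBST) :
    ∀ x, x ∈ r.vertices ↔ x ∈ (Tree.node a l r).vertices ∧ a < x := by
  obtain ⟨hl, hr, _, _⟩ := hb
  intro x
  constructor
  · intro hx
    refine ⟨?_, hr x hx⟩
    simp only [Tree.vertices, Finset.mem_insert, Finset.mem_union]
    exact Or.inr (Or.inr hx)
  · rintro ⟨hx, hax⟩
    simp only [Tree.vertices, Finset.mem_insert, Finset.mem_union] at hx
    rcases hx with rfl | hx | hx
    · exact absurd hax (lt_irrefl _)
    · exact absurd (hl x hx) (by omega)
    · exact hx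

lemma tree_unique (f : ℕ → ℝ) (G : Finset ℕ)
    (Hsep : ∀ α ∈ G, ∀ β ∈ G, α < β → f α = f β → ∃ ν ∈ G, α < ν ∧ ν < β ∧ f ν < f α) :
    ∀ tr₁ tr₂ : Tree ℕ, tr₁.IsBST → tr₂.IsBST → tr₁.vertices = tr₂.vertices →
    tr₁.vertices ⊆ G →
    (∀ x ∈ tr₁.vertices, ∀ z ∈ tr₁.vertices, ∀ y ∈ G, x < y → y < z → y ∈ tr₁.vertices) →
    (∀ α, ∀ ν ∈ tr₁.desc α, f α ≤ f ν) →
    (∀ α, ∀ ν ∈ tr₂.desc α, f α ≤ f ν) →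
    tr₁ = tr₂ := by
  intro tr₁
  induction tr₁ with
  | nil =>
    intro tr₂ _ _ hv _ _ _ _
    exact (Tree.vertices_eq_empty (hv.symm.trans rfl)).symm
  | node a l r ihl ihr =>
    intro tr₂ hb1 hb2 hv hsub hconv hm1 hm2
    cases tr₂ with
    | nil =>
      exfalso
      have : a ∈ (Tree.nil : Tree ℕ).vertices := by
        rw [← hv]; simp [Tree.vertices]
      simpa [Tree.vertices] using this
    | node b l' r' =>
      have ha : a ∈ (Tree.node a l r).vertices := by simp [Tree.vertices]
      have hb : b ∈ (Tree.node a l r).vertices := by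
        rw [hv]; simp [Tree.vertices]
      have fa_min : ∀ x ∈ (Tree.node a l r).vertices, f a ≤ f x := by
        intro x hx
        exact hm1 a x (by rwa [Tree.desc_root])
      have fb_min : ∀ x ∈ (Tree.node a l r).vertices, f b ≤ f x := by
        intro x hx
        refine hm2 b x ?_
        rw [Tree.desc_root, ← hv]
        exact hx
      have hab : a = b := by
        rcases lt_trichotomy a b with hlt | heq | hgt
        · exfalso
          obtain ⟨ν, hνG, h1, h2, h3⟩ := Hsep a (hsub ha) b (hsub hb) hlt
            (le_antisymm (fa_min b hb) (fb_min a ha))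
          exact absurd (fa_min ν (hconv a ha b hb ν hνG h1 h2)) (not_le.2 h3)
        · exact heq
        · exfalso
          obtain ⟨ν, hνG, h1, h2, h3⟩ := Hsep b (hsub hb) a (hsub ha) hgt
            (le_antisymm (fb_min a ha) (fa_min b hb))
          have hν : ν ∈ (Tree.node a l r).vertices := hconv b hb a ha ν hνG h1 h2
          have := fa_min ν hν
          have := fb_min a ha
          linarith
      subst hab
      have hvl : (Tree.vertices l) = (Tree.vertices l') := by
        refine Finset.ext fun x => ?_
        rw [Tree.vertices_node_left hb1 x, Tree.vertices_node_left hb2 x, hv]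
      have hvr : (Tree.vertices r) = (Tree.vertices r') := by
        refine Finset.ext fun x => ?_
        rw [Tree.vertices_node_right hb1 x, Tree.vertices_node_right hb2 x, hv]
      have hsubl : (Tree.vertices l) ⊆ G := fun x hx =>
        hsub (((Tree.vertices_node_left hb1 x).1 hx).1)
      have hsubr : (Tree.vertices r) ⊆ G := fun x hx =>
        hsub (((Tree.vertices_node_right hb1 x).1 hx).1)
      have hconvl : ∀ x ∈ (Tree.vertices l), ∀ z ∈ (Tree.vertices l), ∀ y ∈ G, x < y → y < z →
          y ∈ (Tree.vertices l) := by
        intro x hx z hz y hy hxy hyz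
        obtain ⟨hxV, hxa⟩ := (Tree.vertices_node_left hb1 x).1 hx
        obtain ⟨hzV, hza⟩ := (Tree.vertices_node_left hb1 z).1 hz
        exact (Tree.vertices_node_left hb1 y).2 ⟨hconv x hxV z hzV y hy hxy hyz, by omega⟩
      have hconvr : ∀ x ∈ (Tree.vertices r), ∀ z ∈ (Tree.vertices r), ∀ y ∈ G, x < y → y < z →
          y ∈ (Tree.vertices r) := by
        intro x hx z hz y hy hxy hyz
        obtain ⟨hxV, hax⟩ := (Tree.vertices_node_right hb1 x).1 hx
        obtain ⟨hzV, haz⟩ := (Tree.vertices_node_right hb1 z).1 hz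
        exact (Tree.vertices_node_right hb1 y).2 ⟨hconv x hxV z hzV y hy hxy hyz, by omega⟩
      have hml : ∀ α, ∀ ν ∈ (Tree.desc l) α, f α ≤ f ν := fun α ν hν =>
        hm1 α ν (Tree.desc_node_left a l r α hν)
      have hmr : ∀ α, ∀ ν ∈ (Tree.desc r) α, f α ≤ f ν := fun α ν hν =>
        hm1 α ν (Tree.desc_node_right a l r α hν)
      have hml' : ∀ α, ∀ ν ∈ (Tree.desc l') α, f α ≤ f ν := fun α ν hν =>
        hm2 α ν (Tree.desc_node_left a l' r' α hν)
      have hmr' : ∀ α, ∀ ν ∈ (Tree.desc r') α, f α ≤ f ν := fun α ν hν =>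
        hm2 α ν (Tree.desc_node_right a l' r' α hν)
      rw [ihl l' hb1.2.2.1 hb2.2.2.1 hvl hsubl hconvl hml hml',
        ihr r' hb1.2.2.2 hb2.2.2.2 hvr hsubr hconvr hmr hmr']

/-- the event `{F_t = G}` that the fragmentation process on
`L = {1,…,n}` is in state `G` at time `t` (link `α` has removal time
`τ_α := min{t' : α ∈ F_{t'}}`, so `F_t = {α : τ_α ≤ t}`) is the disjoint union, over
all fragmentation trees `T'` on `G` (binary search trees with vertex set `G`), of the
matching events `{F_t ↔ T'}`, requiring `max{τ_α : α ∈ G} ≤ t`, `t < τ_{L∖G}` and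
`τ_α = τ_{G_α(∅)}` (i.e. `τ_α ≤ τ_ν` for all descendants `ν` of `α` in `T'`) for all
`α ∈ G`.  The hypothesis `hsep` encodes the defining property of the fragmentation
process that two links removed at the same (relevant) time must previously have been
separated by the removal of a link lying strictly between them. -/
theorem fragmentation_state_eq_disjoint_union_of_trees
    {Ω : Type*} (L : Finset ℕ) (τ : ℕ → Ω → ℝ) (t : ℝ)
    (hτ : ∀ α ω, 0 ≤ τ α ω)
    (hsep : ∀ ω, ∀ α ∈ L, ∀ β ∈ L, α < β → τ α ω = τ β ω → τ α ω ≤ t →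
      ∃ ν ∈ L, α < ν ∧ ν < β ∧ τ ν ω < τ α ω)
    (G : Finset ℕ) (hGL : G ⊆ L) :
    ({ω | ∀ α ∈ L, (τ α ω ≤ t ↔ α ∈ G)} =
      ⋃ tr ∈ {tr : Tree ℕ | tr.IsBST ∧ tr.vertices = G},
        {ω | (∀ α ∈ G, τ α ω ≤ t) ∧ (∀ β ∈ L, β ∉ G → t < τ β ω) ∧
          ∀ α ∈ G, ∀ ν ∈ tr.desc α, τ α ω ≤ τ ν ω}) ∧
    (∀ tr₁ tr₂ : Tree ℕ, tr₁.IsBST → tr₁.vertices = G →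
      tr₂.IsBST → tr₂.vertices = G → tr₁ ≠ tr₂ →
      Disjoint
        {ω | (∀ α ∈ G, τ α ω ≤ t) ∧ (∀ β ∈ L, β ∉ G → t < τ β ω) ∧
          ∀ α ∈ G, ∀ ν ∈ tr₁.desc α, τ α ω ≤ τ ν ω}
        {ω | (∀ α ∈ G, τ α ω ≤ t) ∧ (∀ β ∈ L, β ∉ G → t < τ β ω) ∧
          ∀ α ∈ G, ∀ ν ∈ tr₂.desc α, τ α ω ≤ τ ν ω}) := by
  constructor
  · ext ω
    simp only [Set.mem_setOf_eq, Set.mem_iUnion, exists_prop]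
    constructor
    · intro hω
      have h1 : ∀ α ∈ G, τ α ω ≤ t := fun α hα => (hω α (hGL hα)).2 hα
      have h2 : ∀ β ∈ L, β ∉ G → t < τ β ω := fun β hβ hβG =>
        not_le.1 fun hle => hβG ((hω β hβ).1 hle)
      obtain ⟨hvert, hbst, hdesc⟩ := buildTree_spec (fun x => τ x ω) G
      exact ⟨buildTree (fun x => τ x ω) G, ⟨hbst, hvert⟩, h1, h2,
        fun α _ ν hν => hdesc α ν hν⟩
    · rintro ⟨tr, ⟨_, _⟩, h1, h2, _⟩
      intro α hα
      constructor
      · intro hle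
        by_contra hαG
        exact absurd hle (not_le.2 (h2 α hα hαG))
      · exact h1 α
  · intro tr₁ tr₂ hb1 hv1 hb2 hv2 hne
    rw [Set.disjoint_left]
    rintro ω ⟨h1, h2, hd1⟩ ⟨_, _, hd2⟩
    refine hne ?_
    have Hsep : ∀ α ∈ G, ∀ β ∈ G, α < β → τ α ω = τ β ω →
        ∃ ν ∈ G, α < ν ∧ ν < β ∧ τ ν ω < τ α ω := by
      intro α hα β hβ hlt heq
      obtain ⟨ν, hνL, ha, hb, hc⟩ := hsep ω α (hGL hα) β (hGL hβ) hlt heq (h1 α hα)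
      refine ⟨ν, ?_, ha, hb, hc⟩
      by_contra hνG
      exact absurd (hc.trans_le (h1 α hα)) (not_lt.2 (h2 ν hνL hνG).le)
    have hm1 : ∀ α, ∀ ν ∈ tr₁.desc α, τ α ω ≤ τ ν ω := by
      intro α ν hν
      by_cases hα : α ∈ G
      · exact hd1 α hα ν hν
      · rw [Tree.desc_eq_empty (by rw [hv1]; exact hα)] at hν
        exact absurd hν (Finset.notMem_empty ν)
    have hm2 : ∀ α, ∀ ν ∈ tr₂.desc α, τ α ω ≤ τ ν ω := by
      intro α ν hν
      by_cases hα : α ∈ G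
      · exact hd2 α hα ν hν
      · rw [Tree.desc_eq_empty (by rw [hv2]; exact hα)] at hν
        exact absurd hν (Finset.notMem_empty ν)
    exact tree_unique (fun x => τ x ω) G Hsep tr₁ tr₂ hb1 hb2 (hv1.trans hv2.symm)
      (hv1 ▸ subset_rfl) (by rw [hv1]; intro x _ z _ y hy _ _; exact hy) hm1 hm2
end
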